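/- In a tree that is uniformly refined to level L, a contiguous segment of the Morton curve that ends with the last level-L quadrant creates exactly one face-connected subdomain, no matter where it begins. Precisely: for every a with 0 ≤ a < 2^{dL}, the set of level-L quadrants {Q : a ≤ Q ≤ 2^{dL} − 1} is face-connected. -/

import Mathlib

/-- The `r`-th coordinate (1 ≤ r ≤ d) of a level-`L` quadrant `Q` in dimension `d`. -/
def mortonCoord (d L r Q : ℕ) : ℕ :=
  ∑ ℓ ∈ Finset.range L, (Q / 2 ^ (ℓ * d + (r - 1)) % 2) * 2 ^ ℓ

/-- Two level-`L` quadrants are face-neighbors: they differ by exactly one in exactly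
one coordinate and agree in all other coordinates. -/
def MortonFaceNbr (d L Q Q' : ℕ) : Prop :=
  Q ≠ Q' ∧ ∃ r, 1 ≤ r ∧ r ≤ d ∧
    ((mortonCoord d L r Q : ℤ) - (mortonCoord d L r Q' : ℤ)).natAbs = 1 ∧
    ∀ s, 1 ≤ s → s ≤ d → s ≠ r → mortonCoord d L s Q = mortonCoord d L s Q'

/-- A set of level-`L` quadrants is face-connected: the graph on `S` whose edges join
face-neighbors is connected. -/
def MortonFaceConnected (d L : ℕ) (S : Set ℕ) : Prop :=
  ∀ Q ∈ S, ∀ Q' ∈ S,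
    Relation.ReflTransGen (fun a b => a ∈ S ∧ b ∈ S ∧ MortonFaceNbr d L a b) Q Q'

/-- `S` has at most `n` face-connected components: it can be written as a union of `n`
face-connected subsets. -/
def MortonCompBound (d L : ℕ) (S : Set ℕ) (n : ℕ) : Prop :=
  ∃ f : Fin n → Set ℕ, S = ⋃ i, f i ∧ ∀ i, MortonFaceConnected d L (f i)

/-! Every quadrant other than the last one has a face-neighbor further along the Morton curve:
raise by one a coordinate that is not yet maximal. The Morton index is `∑ i, 2 ^ i * D (c i)`
for the bit dilation `D`, which is strictly increasing, so the index goes up. Following such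
neighbors from any quadrant of a final segment stays in the segment and ends at the last
quadrant; symmetry of the neighbor relation then joins any two quadrants of the segment. -/

open Finset

lemma sum_mod_two_mul_two_pow_lt (b : ℕ → ℕ) (n : ℕ) :
    ∑ i ∈ range n, b i % 2 * 2 ^ i < 2 ^ n := by
  induction n with
  | zero => simp
  | succ n ih =>
    rw [sum_range_succ, pow_succ]
    have : b n % 2 * 2 ^ n ≤ 1 * 2 ^ n :=
      Nat.mul_le_mul_right _ (Nat.le_of_lt_succ (Nat.mod_lt _ two_pos))
    linarith

lemma add_two_pow_mul_div_two_pow_mod_two (x y : ℕ) {j k : ℕ} (h : j < k) :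
    (x + 2 ^ k * y) / 2 ^ j % 2 = x / 2 ^ j % 2 := by
  obtain ⟨t, rfl⟩ := Nat.exists_eq_add_of_lt h
  have : 2 ^ (j + t + 1) * y = 2 ^ j * (2 * (2 ^ t * y)) := by ring
  rw [this, Nat.add_mul_div_left _ _ (Nat.two_pow_pos j), Nat.add_mul_mod_self_left]

lemma sum_mod_two_mul_two_pow_div_mod_two (b : ℕ → ℕ) {n j : ℕ} (hj : j < n) :
    (∑ i ∈ range n, b i % 2 * 2 ^ i) / 2 ^ j % 2 = b j % 2 := by
  induction n with
  | zero => omega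
  | succ n ih =>
    rw [sum_range_succ, mul_comm (b n % 2)]
    rcases Nat.lt_or_ge j n with h | h
    · rw [add_two_pow_mul_div_two_pow_mod_two _ _ h, ih h]
    · obtain rfl : j = n := by omega
      rw [Nat.add_mul_div_left _ _ (Nat.two_pow_pos j),
        Nat.div_eq_of_lt (sum_mod_two_mul_two_pow_lt b j), zero_add, Nat.mod_mod]

lemma sum_div_two_pow_mod_two_mul_two_pow (Q n : ℕ) :
    ∑ i ∈ range n, Q / 2 ^ i % 2 * 2 ^ i = Q % 2 ^ n := by
  induction n with
  | zero => simp [Nat.mod_one]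
  | succ n ih => rw [sum_range_succ, ih, Nat.mod_pow_succ, mul_comm]

lemma reflTransGen_Icc_of_exists_gt {R : ℕ → ℕ → Prop} {a M : ℕ}
    (h : ∀ Q, a ≤ Q → Q < M → ∃ Q', Q < Q' ∧ Q' ≤ M ∧ R Q Q') {Q : ℕ} (hQ : Q ∈ Set.Icc a M) :
    Relation.ReflTransGen (fun x y => x ∈ Set.Icc a M ∧ y ∈ Set.Icc a M ∧ R x y) Q M := by
  induction hn : M - Q using Nat.strong_induction_on generalizing Q with
  | _ n ih =>
    rcases hQ.2.lt_or_eq with hlt | rfl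
    · obtain ⟨Q', hQQ', hQ'M, hR⟩ := h Q hQ.1 hlt
      have hQ' : Q' ∈ Set.Icc a M := ⟨hQ.1.trans hQQ'.le, hQ'M⟩
      exact .head ⟨hQ, hQ', hR⟩ (ih (M - Q') (by omega) hQ' rfl)
    · rfl

section Morton

variable {d L : ℕ}

lemma mortonCoord_lt (r Q : ℕ) : mortonCoord d L r Q < 2 ^ L :=
  sum_mod_two_mul_two_pow_lt _ L

lemma mortonCoord_succ (r Q : ℕ) :
    mortonCoord d (L + 1) r Q = Q / 2 ^ (r - 1) % 2 + 2 * mortonCoord d L r (Q / 2 ^ d) := by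
  rw [mortonCoord, sum_range_succ', mortonCoord, mul_sum, add_comm]
  congr 1
  · simp
  · refine sum_congr rfl fun ℓ _ => ?_
    rw [Nat.div_div_eq_div_mul, ← pow_add, pow_succ]
    ring_nf

def mortonEncode (d L : ℕ) (c : ℕ → ℕ) : ℕ :=
  ∑ ℓ ∈ range L, ∑ i ∈ range d, c (i + 1) / 2 ^ ℓ % 2 * 2 ^ (ℓ * d + i)

lemma mortonEncode_congr {c c' : ℕ → ℕ} (h : ∀ r, 1 ≤ r → r ≤ d → c r = c' r) :
    mortonEncode d L c = mortonEncode d L c' :=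
  sum_congr rfl fun _ _ => sum_congr rfl fun i hi => by rw [h (i + 1) (by omega) (by simp_all)]

lemma mortonEncode_succ (c : ℕ → ℕ) :
    mortonEncode d (L + 1) c =
      ∑ i ∈ range d, c (i + 1) % 2 * 2 ^ i + 2 ^ d * mortonEncode d L (fun r => c r / 2) := by
  rw [mortonEncode, sum_range_succ', mortonEncode, mul_sum, add_comm]
  congr 1
  · simp
  · refine sum_congr rfl fun ℓ _ => ?_
    rw [mul_sum]
    refine sum_congr rfl fun i _ => ?_
    rw [Nat.div_div_eq_div_mul, ← pow_succ']
    ring_nf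

lemma mortonEncode_lt (c : ℕ → ℕ) : mortonEncode d L c < 2 ^ (d * L) := by
  induction L generalizing c with
  | zero => simp [mortonEncode]
  | succ L ih =>
    have hlow := sum_mod_two_mul_two_pow_lt (fun i => c (i + 1)) d
    have hhigh := ih (fun r => c r / 2)
    have := Nat.mul_le_mul_left (2 ^ d) hhigh
    rw [mortonEncode_succ, Nat.mul_succ, pow_add]
    linarith

lemma mortonCoord_mortonEncode (c : ℕ → ℕ) {r : ℕ} (hr1 : 1 ≤ r) (hrd : r ≤ d) :
    mortonCoord d L r (mortonEncode d L c) = c r % 2 ^ L := by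
  induction L generalizing c with
  | zero => simp [mortonCoord, Nat.mod_one]
  | succ L ih =>
    have hr : r - 1 < d := by omega
    rw [mortonCoord_succ, mortonEncode_succ, add_two_pow_mul_div_two_pow_mod_two _ _ hr,
      sum_mod_two_mul_two_pow_div_mod_two _ hr, Nat.add_mul_div_left _ _ (Nat.two_pow_pos d),
      Nat.div_eq_of_lt (sum_mod_two_mul_two_pow_lt _ d), zero_add, ih, Nat.sub_add_cancel hr1,
      pow_succ', Nat.mod_mul]

lemma mortonEncode_mortonCoord {Q : ℕ} (hQ : Q < 2 ^ (d * L)) :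
    mortonEncode d L (fun r => mortonCoord d L r Q) = Q := by
  induction L generalizing Q with
  | zero => simp_all [mortonEncode]
  | succ L ih =>
    have hlow : ∑ i ∈ range d, mortonCoord d (L + 1) (i + 1) Q % 2 * 2 ^ i = Q % 2 ^ d := by
      rw [← sum_div_two_pow_mod_two_mul_two_pow]
      refine sum_congr rfl fun i _ => ?_
      rw [mortonCoord_succ, Nat.add_mul_mod_self_left, Nat.mod_mod, Nat.add_sub_cancel]
    have hhigh : (fun r => mortonCoord d (L + 1) r Q / 2) = fun r => mortonCoord d L r (Q / 2 ^ d) := by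
      funext r
      rw [mortonCoord_succ]
      omega
    have hQ' : Q / 2 ^ d < 2 ^ (d * L) := by
      rw [Nat.div_lt_iff_lt_mul (Nat.two_pow_pos d), ← pow_add, ← Nat.mul_succ]
      exact hQ
    rw [mortonEncode_succ, hlow, hhigh, ih hQ', Nat.mod_add_div]

lemma mortonEncode_const_two_pow_sub_one :
    mortonEncode d L (fun _ => 2 ^ L - 1) = 2 ^ (d * L) - 1 := by
  induction L with
  | zero => simp [mortonEncode]
  | succ L ih =>
    have hpos := Nat.one_le_two_pow (n := L)
    have hmod : (2 ^ (L + 1) - 1) % 2 = 1 := by rw [pow_succ]; omega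
    have hdiv : (fun _ : ℕ => (2 ^ (L + 1) - 1) / 2) = fun _ => 2 ^ L - 1 := by
      funext; rw [pow_succ]; omega
    have hlow : ∑ i ∈ range d, (2 ^ (L + 1) - 1) % 2 * 2 ^ i = 2 ^ d - 1 := by
      simp [hmod, Nat.geomSum_eq le_rfl]
    rw [mortonEncode_succ, hlow, hdiv, ih, Nat.mul_succ, pow_add, mul_comm (2 ^ (d * L)),
      Nat.mul_sub, mul_one]
    have := Nat.one_le_two_pow (n := d)
    have := Nat.mul_le_mul_left (2 ^ d) (Nat.one_le_two_pow (n := d * L))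
    omega

def bitDilate (d L c : ℕ) : ℕ :=
  ∑ ℓ ∈ range L, c / 2 ^ ℓ % 2 * 2 ^ (ℓ * d)

lemma bitDilate_succ (c : ℕ) :
    bitDilate d (L + 1) c = c % 2 + 2 ^ d * bitDilate d L (c / 2) := by
  rw [bitDilate, sum_range_succ', bitDilate, mul_sum, add_comm]
  congr 1
  · simp
  · refine sum_congr rfl fun ℓ _ => ?_
    rw [Nat.div_div_eq_div_mul, ← pow_succ']
    ring_nf

lemma bitDilate_strictMonoOn (hd : 1 ≤ d) : StrictMonoOn (bitDilate d L) (Set.Iio (2 ^ L)) := by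
  induction L with
  | zero => intro c hc; simp_all
  | succ L ih =>
    intro c hc c' hc' hlt
    simp only [Set.mem_Iio, pow_succ] at hc hc'
    rw [bitDilate_succ, bitDilate_succ]
    rcases (Nat.div_le_div_right (c := 2) hlt.le).lt_or_eq with hhigh | hhigh
    · have hstep : 2 ^ d * bitDilate d L (c / 2) + 2 ^ d ≤ 2 ^ d * bitDilate d L (c' / 2) := by
        simpa [mul_add] using Nat.mul_le_mul_left (2 ^ d)
          (ih (show c / 2 < 2 ^ L by omega) (show c' / 2 < 2 ^ L by omega) hhigh)
      have : 2 ≤ 2 ^ d := Nat.le_self_pow (by omega) 2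
      omega
    · rw [hhigh]
      omega

lemma mortonEncode_eq_sum_bitDilate (c : ℕ → ℕ) :
    mortonEncode d L c = ∑ i ∈ range d, 2 ^ i * bitDilate d L (c (i + 1)) := by
  rw [mortonEncode, sum_comm]
  refine sum_congr rfl fun i _ => ?_
  rw [bitDilate, mul_sum]
  refine sum_congr rfl fun ℓ _ => ?_
  rw [pow_add]
  ring

lemma mortonEncode_lt_mortonEncode_update {c : ℕ → ℕ} {r x : ℕ} (hr1 : 1 ≤ r) (hrd : r ≤ d)
    (hlt : c r < x) (hx : x < 2 ^ L) :
    mortonEncode d L c < mortonEncode d L (Function.update c r x) := by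
  rw [mortonEncode_eq_sum_bitDilate, mortonEncode_eq_sum_bitDilate]
  refine sum_lt_sum (fun i _ => ?_) ⟨r - 1, mem_range.2 (by omega), ?_⟩
  · rcases eq_or_ne (i + 1) r with rfl | hi
    · simp only [Function.update_self]
      exact Nat.mul_le_mul_left _ ((bitDilate_strictMonoOn (by omega)).monotoneOn
        (hlt.trans hx) hx hlt.le)
    · rw [Function.update_of_ne hi]
  · rw [Nat.sub_add_cancel hr1, Function.update_self]
    exact Nat.mul_lt_mul_of_pos_left
      (bitDilate_strictMonoOn (by omega) (hlt.trans hx) hx hlt) (Nat.two_pow_pos _)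

lemma MortonFaceNbr.symm {Q Q' : ℕ} (h : MortonFaceNbr d L Q Q') : MortonFaceNbr d L Q' Q := by
  obtain ⟨hne, r, hr1, hrd, hdiff, hrest⟩ := h
  refine ⟨hne.symm, r, hr1, hrd, ?_, fun s hs1 hsd hsr => (hrest s hs1 hsd hsr).symm⟩
  rw [← hdiff, ← Int.natAbs_neg, neg_sub]

lemma mortonFaceNbr_mortonEncode_update {c : ℕ → ℕ} (hc : ∀ s, 1 ≤ s → s ≤ d → c s < 2 ^ L)
    {r : ℕ} (hr1 : 1 ≤ r) (hrd : r ≤ d) (hr : c r + 1 < 2 ^ L) :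
    MortonFaceNbr d L (mortonEncode d L c) (mortonEncode d L (Function.update c r (c r + 1))) := by
  refine ⟨(mortonEncode_lt_mortonEncode_update hr1 hrd (Nat.lt_succ_self _) hr).ne, r, hr1, hrd,
    ?_, fun s hs1 hsd hsr => ?_⟩
  · rw [mortonCoord_mortonEncode _ hr1 hrd, mortonCoord_mortonEncode _ hr1 hrd,
      Function.update_self, Nat.mod_eq_of_lt hr, Nat.mod_eq_of_lt (hc r hr1 hrd)]
    omega
  · rw [mortonCoord_mortonEncode _ hs1 hsd, mortonCoord_mortonEncode _ hs1 hsd,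
      Function.update_of_ne hsr]

lemma exists_mortonCoord_add_one_lt {Q : ℕ} (hQ : Q < 2 ^ (d * L) - 1) :
    ∃ r, 1 ≤ r ∧ r ≤ d ∧ mortonCoord d L r Q + 1 < 2 ^ L := by
  by_contra! hmax
  have := mortonEncode_mortonCoord (show Q < 2 ^ (d * L) by omega)
  rw [mortonEncode_congr (c' := fun _ => 2 ^ L - 1)
    (fun r hr1 hrd => by
      have := hmax r hr1 hrd
      have := mortonCoord_lt (d := d) (L := L) r Q
      omega),
    mortonEncode_const_two_pow_sub_one] at this
  omega

lemma exists_gt_mortonFaceNbr {Q : ℕ} (hQ : Q < 2 ^ (d * L) - 1) :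
    ∃ Q', Q < Q' ∧ Q' ≤ 2 ^ (d * L) - 1 ∧ MortonFaceNbr d L Q Q' := by
  obtain ⟨r, hr1, hrd, hr⟩ := exists_mortonCoord_add_one_lt hQ
  set c := fun s => mortonCoord d L s Q
  have hQc : mortonEncode d L c = Q := mortonEncode_mortonCoord (by omega)
  refine ⟨mortonEncode d L (Function.update c r (c r + 1)), ?_, ?_, ?_⟩
  · rw [← hQc]
    exact mortonEncode_lt_mortonEncode_update hr1 hrd (Nat.lt_succ_self _) hr
  · have := mortonEncode_lt (d := d) (L := L) (Function.update c r (c r + 1))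
    omega
  · rw [← hQc]
    exact mortonFaceNbr_mortonEncode_update (fun s _ _ => mortonCoord_lt s Q) hr1 hrd hr

lemma mortonFaceConnected_of_forall_reflTransGen {S : Set ℕ} {M : ℕ}
    (h : ∀ Q ∈ S, Relation.ReflTransGen (fun x y => x ∈ S ∧ y ∈ S ∧ MortonFaceNbr d L x y) Q M) :
    MortonFaceConnected d L S := fun Q hQ Q' hQ' =>
  (h Q hQ).trans <| Relation.reflTransGen_swap.mp <|
    Relation.ReflTransGen.mono (fun _ _ ⟨hx, hy, hxy⟩ => ⟨hy, hx, hxy.symm⟩) _ _ (h Q' hQ')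

end Morton

theorem morton_segment_to_last_connected_general (d L a : ℕ) :
    MortonFaceConnected d L (Set.Icc a (2 ^ (d * L) - 1)) :=
  mortonFaceConnected_of_forall_reflTransGen fun _ =>
    reflTransGen_Icc_of_exists_gt fun _ _ => exists_gt_mortonFaceNbr

/-- In a tree uniformly refined to level `L`, a contiguous segment of the Morton curve
ending with the last level-`L` quadrant is face-connected, no matter where it begins. -/
theorem morton_segment_to_last_connected (d L a : ℕ) (hd : 1 ≤ d)
    (ha : a < 2 ^ (d * L)) :
    MortonFaceConnected d L (Set.Icc a (2 ^ (d * L) - 1)) :=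
  morton_segment_to_last_connected_general d L a
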